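/- Let (Ω,d,μ) be a metric probability space, 1 ≤ q < ∞, and let N ∈ 𝒩 be such that t ↦ N(t)^{1/q}/t is non-decreasing on (0,∞). The following are equivalent: (1) D₁·‖f − M_μ f‖_{N(μ)} ≤ ‖|∇f|‖_{L_q(μ)} for all f ∈ ℱ; (2) Cap_q(t,1/2) ≥ D₂·N^∧(t) for all t ∈ [0,1/2]. Quantitatively: if (1) holds with constant D₁ then (2) holds with D₂ = D₁, and if (2) holds with constant D₂ then (1) holds with constant D₂/4; in particular the best constants satisfy D₁ ≤ D₂ ≤ 4 D₁. -/

import Mathlib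

/-!
(1) ⇒ (2): a function admissible for `Cap_q(t, 1/2)` has median `0` and equals `1` on a set of
measure at least `t`, so its Orlicz norm is at least `N^∧(t)`.

(2) ⇒ (1): split `f - M f` into its positive and negative parts `h`. For the dyadic layers
`{2^k ≤ h < 2^(k+1)}`, the capacity bound applied to a ramp of `h` of width `θ 2^(k-1)` rising in
layer `k - 1` bounds `N^∧(μ{h ≥ 2^k})`; the monotonicity of `N(t)^(1/q)/t` turns this into
`∫_{layer k} N(h/v) ≤ (4/(D₂ θ v))^q ∫_{layer k-1} |∇h|^q`. Summing over `k` and letting `θ → 1`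
gives `‖f - M f‖_N ≤ (4/D₂) ‖∇f‖_q`.
-/

open MeasureTheory Filter Set Metric
open scoped ENNReal NNReal Topology

noncomputable section

/-- The class 𝒩 of continuous increasing functions mapping ℝ₊ onto ℝ₊. -/
structure MemN (N : ℝ → ℝ) : Prop where
  contOn : ContinuousOn N (Ici 0)
  strictMonoOn : StrictMonoOn N (Ici 0)
  mapsTo : MapsTo N (Ici 0) (Ici 0)
  surjOn : SurjOn N (Ici 0) (Ici 0)

/-- A Young function: convex, increasing, vanishing at 0. -/
structure IsYoung (N : ℝ → ℝ) : Prop where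
  convexOn : ConvexOn ℝ (Ici 0) N
  strictMonoOn : StrictMonoOn N (Ici 0)
  zero : N 0 = 0

/-- The (generalized) inverse `N⁻¹` of `N : ℝ₊ → ℝ₊`. -/
def ninv (N : ℝ → ℝ) (y : ℝ) : ℝ := sInf {t : ℝ | 0 ≤ t ∧ y ≤ N t}

/-- The adjoint function `N^∧(t) = 1 / N⁻¹(1/t)`. -/
def nwedge (N : ℝ → ℝ) (t : ℝ) : ℝ := 1 / ninv N (1 / t)

variable {Ω : Type*}

/-- The class ℱ of functions which are Lipschitz on every ball. -/
def LipschitzOnBalls [PseudoMetricSpace Ω] (f : Ω → ℝ) : Prop :=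
  ∀ (x : Ω) (r : ℝ), ∃ K : ℝ≥0, LipschitzOnWith K f (Metric.ball x r)

/-- The modulus of the gradient `|∇f|(x)` (equal to 0 at isolated points). -/
def gradNorm [PseudoMetricSpace Ω] (f : Ω → ℝ) (x : Ω) : ℝ :=
  limsup (fun y => |f y - f x| / dist y x) (𝓝[≠] x)

/-- `‖ |∇f| ‖_{L_q(μ)}`. -/
def gradLqNorm [PseudoMetricSpace Ω] [MeasurableSpace Ω] (μ : Measure Ω) (q : ℝ≥0∞)
    (f : Ω → ℝ) : ℝ≥0∞ :=
  eLpNorm (gradNorm f) q μ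

/-- The Orlicz (quasi-)norm `‖f‖_{N(μ)}`. -/
def orliczNorm [MeasurableSpace Ω] (μ : Measure Ω) (N : ℝ → ℝ) (f : Ω → ℝ) : ℝ :=
  sInf {v : ℝ | 0 < v ∧ ∫⁻ x, ENNReal.ofReal (N (|f x| / v)) ∂μ ≤ 1}

/-- The dual norm `‖f‖_{N(μ)*}`. -/
def dualOrliczNorm [MeasurableSpace Ω] (μ : Measure Ω) (N : ℝ → ℝ) (f : Ω → ℝ) : ℝ :=
  sSup {r : ℝ | ∃ g : Ω → ℝ, orliczNorm μ N g ≤ 1 ∧ r = ∫ x, f x * g x ∂μ}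

/-- The weak Orlicz quasi-norm `‖f‖_{N(μ),∞} = sup_{t>0} N^∧(μ{|f|≥t})·t`. -/
def weakOrliczNorm [MeasurableSpace Ω] (μ : Measure Ω) (N : ℝ → ℝ) (f : Ω → ℝ) : ℝ :=
  sSup {r : ℝ | ∃ t : ℝ, 0 < t ∧ r = nwedge N ((μ {x | t ≤ |f x|}).toReal) * t}

/-- `m` is a median of `f` under `μ`. -/
def IsMedian [MeasurableSpace Ω] (μ : Measure Ω) (f : Ω → ℝ) (m : ℝ) : Prop :=
  (1 / 2 : ℝ≥0∞) ≤ μ {x | m ≤ f x} ∧ (1 / 2 : ℝ≥0∞) ≤ μ {x | f x ≤ m}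

/-- Minkowski's exterior boundary measure `μ⁺(A)`. -/
def boundaryMeasure [PseudoMetricSpace Ω] [MeasurableSpace Ω] (μ : Measure Ω) (A : Set Ω) :
    ℝ≥0∞ :=
  liminf (fun ε : ℝ => (μ (Metric.thickening ε A) - μ A) / ENNReal.ofReal ε) (𝓝[>] (0 : ℝ))

/-- The isoperimetric profile `I(t)`: the maximal function with `μ⁺(A) ≥ I(μ(A))`. -/
def isoProfile [PseudoMetricSpace Ω] [MeasurableSpace Ω] (μ : Measure Ω) (t : ℝ) : ℝ≥0∞ :=
  ⨅ (A : Set Ω) (_ : MeasurableSet A) (_ : μ A = ENNReal.ofReal t), boundaryMeasure μ A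

/-- `Ĩ(t) = min(I(t), I(1-t))`. -/
def tildeIsoProfile [PseudoMetricSpace Ω] [MeasurableSpace Ω] (μ : Measure Ω) (t : ℝ) : ℝ≥0∞ :=
  min (isoProfile μ t) (isoProfile μ (1 - t))

/-- The `q`-capacity `Cap_q(a,b)`. -/
def capacity [PseudoMetricSpace Ω] [MeasurableSpace Ω] (μ : Measure Ω) (q a b : ℝ) : ℝ≥0∞ :=
  ⨅ (Φ : Ω → ℝ) (_ : LipschitzOnBalls Φ) (_ : ∀ x, Φ x ∈ Icc (0 : ℝ) 1)
    (_ : ENNReal.ofReal a ≤ μ {x | Φ x = 1}) (_ : ENNReal.ofReal (1 - b) ≤ μ {x | Φ x = 0}),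
    gradLqNorm μ (ENNReal.ofReal q) Φ

/-- A log-concave function (of the form exp(-ψ) with ψ convex, ℝ ∪ {+∞} valued). -/
def IsLogConcaveFn {E : Type*} [AddCommGroup E] [Module ℝ E] (f : E → ℝ) : Prop :=
  (∀ x, 0 ≤ f x) ∧
    ∀ x y : E, ∀ a b : ℝ, 0 ≤ a → 0 ≤ b → a + b = 1 → f x ^ a * f y ^ b ≤ f (a • x + b • y)

/-- An absolutely continuous log-concave measure on Euclidean space. -/
def IsLogConcaveMeasure {n : ℕ} (μ : Measure (EuclideanSpace ℝ (Fin n))) : Prop :=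
  ∃ f : EuclideanSpace ℝ (Fin n) → ℝ, IsLogConcaveFn f ∧
    μ = volume.withDensity fun x => ENNReal.ofReal (f x)

lemma ofReal_half : ENNReal.ofReal (1 / 2) = 1 / 2 := by
  rw [one_div, ENNReal.ofReal_inv_of_pos two_pos, ENNReal.ofReal_ofNat, one_div]

lemma eLpNorm_ofReal_rpow {α : Type*} [MeasurableSpace α] (μ : Measure α) {q : ℝ} (hq : 0 < q)
    (g : α → ℝ) : eLpNorm g (ENNReal.ofReal q) μ ^ q = ∫⁻ x, ‖g x‖ₑ ^ q ∂μ := by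
  rw [eLpNorm_eq_eLpNorm' (by simpa using hq) ENNReal.ofReal_ne_top, ENNReal.toReal_ofReal hq.le,
    lintegral_rpow_enorm_eq_rpow_eLpNorm' hq]

namespace MemN

variable {N : ℝ → ℝ}

lemma nonneg (hN : MemN N) {t : ℝ} (ht : 0 ≤ t) : 0 ≤ N t := hN.mapsTo ht

lemma zero (hN : MemN N) : N 0 = 0 := by
  obtain ⟨s, hs, hNs⟩ := hN.surjOn (mem_Ici.2 le_rfl : (0 : ℝ) ∈ Ici 0)
  exact le_antisymm (hNs ▸ hN.strictMonoOn.monotoneOn (mem_Ici.2 le_rfl) hs hs) (hN.nonneg le_rfl)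

lemma ninv_apply (hN : MemN N) {s : ℝ} (hs : 0 ≤ s) : ninv N (N s) = s :=
  le_antisymm (csInf_le ⟨0, fun _ ht => ht.1⟩ ⟨hs, le_rfl⟩)
    (le_csInf ⟨s, hs, le_rfl⟩ fun _ ht => (hN.strictMonoOn.le_iff_le hs ht.1).1 ht.2)

lemma le_ninv_iff (hN : MemN N) {x y : ℝ} (hx : 0 ≤ x) (hy : 0 ≤ y) :
    x ≤ ninv N y ↔ N x ≤ y := by
  obtain ⟨s, hs, rfl⟩ := hN.surjOn hy
  rw [hN.ninv_apply hs]
  exact (hN.strictMonoOn.le_iff_le hx hs).symm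

lemma ninv_pos (hN : MemN N) {y : ℝ} (hy : 0 < y) : 0 < ninv N y := by
  obtain ⟨s, hs, rfl⟩ := hN.surjOn hy.le
  rw [hN.ninv_apply hs]
  exact hs.lt_of_ne (by rintro rfl; exact hy.ne' hN.zero)

lemma nwedge_zero (hN : MemN N) : nwedge N 0 = 0 := by
  have h := hN.ninv_apply le_rfl
  rw [hN.zero] at h
  rw [nwedge, div_zero, h, div_zero]

lemma nwedge_pos (hN : MemN N) {r : ℝ} (hr : 0 < r) : 0 < nwedge N r :=
  one_div_pos.2 (hN.ninv_pos (one_div_pos.2 hr))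

lemma nwedge_le_iff (hN : MemN N) {r z : ℝ} (hr : 0 < r) (hz : 0 < z) :
    nwedge N r ≤ z ↔ r * N (1 / z) ≤ 1 := by
  rw [nwedge, one_div_le (hN.ninv_pos (one_div_pos.2 hr)) hz,
    hN.le_ninv_iff (one_div_pos.2 hz).le (one_div_pos.2 hr).le, le_div_iff₀ hr, mul_comm]

variable {q : ℝ}

lemma apply_le_div_rpow_mul (hN : MemN N) (hq : 0 < q)
    (hNq : MonotoneOn (fun t => N t ^ (1 / q) / t) (Ioi 0)) {u c : ℝ} (hu : 0 < u)
    (huc : u ≤ c) : N u ≤ (u / c) ^ q * N c := by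
  have hc := hu.trans_le huc
  have hNu := hN.nonneg hu.le
  have hNc := hN.nonneg hc.le
  have h : N u ^ (1 / q) ≤ u / c * N c ^ (1 / q) := by
    have := hNq hu hc huc
    rw [div_le_div_iff₀ hu hc] at this
    rw [div_mul_eq_mul_div, le_div_iff₀ hc]
    linarith
  calc N u = (N u ^ (1 / q)) ^ q := by
        rw [← Real.rpow_mul hNu, one_div_mul_cancel hq.ne', Real.rpow_one]
    _ ≤ (u / c * N c ^ (1 / q)) ^ q := Real.rpow_le_rpow (Real.rpow_nonneg hNu _) h hq.le
    _ = (u / c) ^ q * N c := by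
      rw [Real.mul_rpow (div_pos hu hc).le (Real.rpow_nonneg hNc _), ← Real.rpow_mul hNc,
        one_div_mul_cancel hq.ne', Real.rpow_one]

lemma mul_apply_le_rpow_of_nwedge_le (hN : MemN N) (hq : 0 < q)
    (hNq : MonotoneOn (fun t => N t ^ (1 / q) / t) (Ioi 0)) {r z u : ℝ} (hr : 0 ≤ r)
    (hrz : nwedge N r ≤ z) (hu : 0 < u) (huz : u * z ≤ 1) : r * N u ≤ (u * z) ^ q := by
  rcases hr.eq_or_lt with rfl | hr
  · rw [zero_mul]
    exact Real.rpow_nonneg (mul_nonneg hu.le (hN.nwedge_zero ▸ hrz)) _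
  have hz : 0 < z := (hN.nwedge_pos hr).trans_le hrz
  have hu' : u ≤ 1 / z := by rwa [le_div_iff₀ hz]
  calc r * N u ≤ r * ((u / (1 / z)) ^ q * N (1 / z)) :=
        mul_le_mul_of_nonneg_left (hN.apply_le_div_rpow_mul hq hNq hu hu') hr.le
    _ = (u * z) ^ q * (r * N (1 / z)) := by rw [one_div z, div_inv_eq_mul]; ring
    _ ≤ (u * z) ^ q := mul_le_of_le_one_right (Real.rpow_nonneg (by positivity) _)
        ((hN.nwedge_le_iff hr hz).1 hrz)

end MemN

section Orlicz

variable [MeasurableSpace Ω] {μ : Measure Ω} {N : ℝ → ℝ}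

lemma orliczNorm_le_of_forall_lt {g : Ω → ℝ} {B : ℝ} (hB : 0 ≤ B)
    (h : ∀ v, B < v → ∫⁻ x, ENNReal.ofReal (N (|g x| / v)) ∂μ ≤ 1) :
    orliczNorm μ N g ≤ B :=
  le_of_forall_pos_le_add fun _ hε =>
    csInf_le ⟨0, fun _ hv => hv.1.le⟩ ⟨by positivity, h _ (lt_add_of_pos_right B hε)⟩

lemma nwedge_le_orliczNorm [IsProbabilityMeasure μ] (hN : MemN N) {g : Ω → ℝ}
    (hg : ∀ x, |g x| ≤ 1) {A : Set Ω} (hA : MeasurableSet A) (hgA : ∀ x ∈ A, |g x| = 1)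
    {t : ℝ} (ht : 0 ≤ t) (htA : ENNReal.ofReal t ≤ μ A) :
    nwedge N t ≤ orliczNorm μ N g := by
  rcases ht.eq_or_lt with rfl | ht
  · rw [hN.nwedge_zero]
    exact Real.sInf_nonneg fun _ hv => hv.1.le
  obtain ⟨s, hs, hNs⟩ := hN.surjOn (mem_Ici.2 zero_le_one)
  have hs0 : 0 < s := (mem_Ici.1 hs).lt_of_ne (by rintro rfl; simp [hN.zero] at hNs)
  have hne : ∫⁻ x, ENNReal.ofReal (N (|g x| / (1 / s))) ∂μ ≤ 1 := by
    refine (lintegral_mono fun x => ENNReal.ofReal_le_one.2 ?_).trans_eq (by simp)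
    rw [one_div, div_inv_eq_mul, ← hNs]
    exact hN.strictMonoOn.monotoneOn (mem_Ici.2 (by positivity)) hs
      (mul_le_of_le_one_left hs0.le (hg x))
  refine le_csInf ⟨_, one_div_pos.2 hs0, hne⟩ fun v ⟨hv, hint⟩ => ?_
  refine (hN.nwedge_le_iff ht hv).2 ?_
  rw [← ENNReal.ofReal_le_one, mul_comm, ENNReal.ofReal_mul (hN.nonneg (by positivity))]
  calc ENNReal.ofReal (N (1 / v)) * ENNReal.ofReal t
      ≤ ∫⁻ _ in A, ENNReal.ofReal (N (1 / v)) ∂μ := by rw [setLIntegral_const]; gcongr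
    _ = ∫⁻ x in A, ENNReal.ofReal (N (|g x| / v)) ∂μ :=
        setLIntegral_congr_fun hA fun x hx => by rw [hgA x hx]
    _ ≤ 1 := setLIntegral_le_lintegral _ _ |>.trans hint

end Orlicz

section Gradient

variable [PseudoMetricSpace Ω] {f Φ : Ω → ℝ}

lemma LipschitzOnBalls.continuous (hf : LipschitzOnBalls f) : Continuous f :=
  continuous_iff_continuousAt.2 fun x =>
    let ⟨_, hK⟩ := hf x 1
    hK.continuousOn.continuousAt (ball_mem_nhds x one_pos)

lemma LipschitzOnBalls.of_abs_sub_le (hf : LipschitzOnBalls f) {K : ℝ} (hK : 0 ≤ K)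
    (h : ∀ y z, |Φ y - Φ z| ≤ K * |f y - f z|) : LipschitzOnBalls Φ := fun x r => by
  obtain ⟨L, hL⟩ := hf x r
  refine ⟨K.toNNReal * L, LipschitzOnWith.of_dist_le_mul fun y hy z hz => ?_⟩
  rw [Real.dist_eq, NNReal.coe_mul, Real.coe_toNNReal _ hK, mul_assoc]
  exact (h y z).trans (mul_le_mul_of_nonneg_left (hL.dist_le_mul y hy z hz) hK)

lemma LipschitzOnBalls.sub_const (hf : LipschitzOnBalls f) (m : ℝ) :
    LipschitzOnBalls fun y => f y - m :=
  hf.of_abs_sub_le zero_le_one fun y z => by rw [sub_sub_sub_cancel_right, one_mul]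

lemma LipschitzOnBalls.const_sub (hf : LipschitzOnBalls f) (m : ℝ) :
    LipschitzOnBalls fun y => m - f y :=
  hf.of_abs_sub_le zero_le_one fun y z => by rw [sub_sub_sub_cancel_left, abs_sub_comm, one_mul]

lemma LipschitzOnBalls.isBoundedUnder_le_slope (hf : LipschitzOnBalls f) (x : Ω) :
    IsBoundedUnder (· ≤ ·) (𝓝[≠] x) fun y => |f y - f x| / dist y x := by
  obtain ⟨K, hK⟩ := hf x 1
  refine ⟨K, eventually_map.2 ?_⟩
  filter_upwards [nhdsWithin_le_nhds (ball_mem_nhds x one_pos)] with y hy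
  exact div_le_of_le_mul₀ dist_nonneg K.coe_nonneg (hK.dist_le_mul y hy x (mem_ball_self one_pos))

lemma gradNorm_of_nhdsNE_eq_bot {x : Ω} (hx : 𝓝[≠] x = ⊥) : gradNorm f x = 0 := by
  simp [gradNorm, hx, limsup_eq]

lemma gradNorm_nonneg (f : Ω → ℝ) (x : Ω) : 0 ≤ gradNorm f x := by
  rcases (𝓝[≠] x).eq_or_neBot with hx | hx
  · exact (gradNorm_of_nhdsNE_eq_bot hx).ge
  · refine Real.sInf_nonneg fun a ha => ?_
    obtain ⟨y, hy⟩ :=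
      (eventually_map.1 (show ∀ᶠ b in map _ (𝓝[≠] x), b ≤ a from ha)).exists
    exact (div_nonneg (abs_nonneg _) dist_nonneg).trans hy

lemma gradNorm_le_mul (hf : LipschitzOnBalls f) {K : ℝ} (hK : 0 ≤ K) {x : Ω}
    (h : ∀ᶠ y in 𝓝 x, |Φ y - Φ x| ≤ K * |f y - f x|) :
    gradNorm Φ x ≤ K * gradNorm f x := by
  rcases (𝓝[≠] x).eq_or_neBot with hx | hx
  · simp [gradNorm_of_nhdsNE_eq_bot hx]
  have hslope : 0 ≤ᶠ[𝓝[≠] x] fun y => |f y - f x| / dist y x :=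
    Eventually.of_forall fun _ => div_nonneg (abs_nonneg _) dist_nonneg
  calc gradNorm Φ x
      ≤ limsup ((fun _ => K) * fun y => |f y - f x| / dist y x) (𝓝[≠] x) := by
        refine limsup_le_limsup ?_ (isBoundedUnder_of_eventually_ge (a := 0) ?_).isCoboundedUnder_le
          (isBoundedUnder_le_mul_of_nonneg (Frequently.of_forall fun _ => hK)
            isBoundedUnder_const hslope (hf.isBoundedUnder_le_slope x))
        · filter_upwards [nhdsWithin_le_nhds h] with y hy
          simp only [Pi.mul_apply, mul_div_assoc']
          exact div_le_div_of_nonneg_right hy dist_nonneg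
        · exact Eventually.of_forall fun _ => div_nonneg (abs_nonneg _) dist_nonneg
    _ ≤ limsup (fun _ => K) (𝓝[≠] x) * gradNorm f x :=
        limsup_mul_le (Frequently.of_forall fun _ => hK) isBoundedUnder_const hslope
          (hf.isBoundedUnder_le_slope x)
    _ = K * gradNorm f x := by rw [limsup_const]

lemma gradNorm_sub_const (f : Ω → ℝ) (m : ℝ) : gradNorm (fun y => f y - m) = gradNorm f := by
  ext x
  simp only [gradNorm, sub_sub_sub_cancel_right]

lemma gradNorm_const_sub (f : Ω → ℝ) (m : ℝ) : gradNorm (fun y => m - f y) = gradNorm f := by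
  ext x
  simp only [gradNorm, sub_sub_sub_cancel_left, abs_sub_comm (f x)]

end Gradient

section Ramp

variable {f : Ω → ℝ} {a b : ℝ}

def ramp (f : Ω → ℝ) (a b : ℝ) (x : Ω) : ℝ := projIcc 0 1 zero_le_one ((f x - a) / b)

lemma ramp_mem_Icc (x : Ω) : ramp f a b x ∈ Icc (0 : ℝ) 1 := Subtype.prop _

lemma ramp_eq_zero (hb : 0 < b) {x : Ω} (hx : f x ≤ a) : ramp f a b x = 0 := by
  rw [ramp, projIcc_of_le_left _ (div_nonpos_of_nonpos_of_nonneg (by linarith) hb.le)]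

lemma ramp_eq_one (hb : 0 < b) {x : Ω} (hx : a + b ≤ f x) : ramp f a b x = 1 := by
  rw [ramp, projIcc_of_right_le _ ((one_le_div hb).2 (by linarith))]

lemma abs_ramp_sub_le (hb : 0 < b) (y z : Ω) :
    |ramp f a b y - ramp f a b z| ≤ b⁻¹ * |f y - f z| := by
  refine (abs_projIcc_sub_projIcc zero_le_one).trans_eq ?_
  rw [← sub_div, sub_sub_sub_cancel_right, abs_div, abs_of_pos hb, div_eq_inv_mul]

lemma LipschitzOnBalls.ramp [PseudoMetricSpace Ω] (hf : LipschitzOnBalls f) (hb : 0 < b) :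
    LipschitzOnBalls (ramp f a b) :=
  hf.of_abs_sub_le (inv_nonneg.2 hb.le) (abs_ramp_sub_le hb)

lemma gradNorm_ramp_le [PseudoMetricSpace Ω] (hf : LipschitzOnBalls f) (hb : 0 < b) (x : Ω) :
    gradNorm (ramp f a b) x ≤
      b⁻¹ * {y | a ≤ f y ∧ f y ≤ a + b}.indicator (gradNorm f) x := by
  by_cases hx : x ∈ {y | a ≤ f y ∧ f y ≤ a + b}
  · rw [indicator_of_mem hx]
    exact gradNorm_le_mul hf (inv_nonneg.2 hb.le)
      (Eventually.of_forall fun y => abs_ramp_sub_le hb y x)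
  rw [indicator_of_notMem hx, mul_zero]
  have hconst : ∀ᶠ y in 𝓝 x, ramp f a b y = ramp f a b x := by
    simp only [mem_ofPred_eq, not_and_or, not_le] at hx
    rcases hx with hx | hx
    · filter_upwards [hf.continuous.continuousAt.eventually_lt continuousAt_const hx] with y hy
      rw [ramp_eq_zero hb hy.le, ramp_eq_zero hb hx.le]
    · filter_upwards [continuousAt_const.eventually_lt hf.continuous.continuousAt hx] with y hy
      rw [ramp_eq_one hb hy.le, ramp_eq_one hb hx.le]
  simpa using gradNorm_le_mul hf le_rfl (hconst.mono fun y hy => by simp [hy])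

lemma capacity_le_ramp [PseudoMetricSpace Ω] [MeasurableSpace Ω] [OpensMeasurableSpace Ω]
    (μ : Measure Ω) (hf : LipschitzOnBalls f) (hb : 0 < b) {q t c : ℝ}
    (ht : ENNReal.ofReal t ≤ μ {x | a + b ≤ f x})
    (hc : ENNReal.ofReal (1 - c) ≤ μ {x | f x ≤ a}) :
    capacity μ q t c ≤
      ENNReal.ofReal b⁻¹ * eLpNorm (gradNorm f) (ENNReal.ofReal q)
        (μ.restrict {x | a ≤ f x ∧ f x ≤ a + b}) := by
  have hband : MeasurableSet {x | a ≤ f x ∧ f x ≤ a + b} :=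
    (measurableSet_le measurable_const hf.continuous.measurable).inter
      (measurableSet_le hf.continuous.measurable measurable_const)
  refine iInf_le_of_le (ramp f a b) <| iInf_le_of_le (hf.ramp hb) <| iInf_le_of_le ramp_mem_Icc <|
    iInf_le_of_le (ht.trans (measure_mono fun x hx => ramp_eq_one hb hx)) <|
    iInf_le_of_le (hc.trans (measure_mono fun x hx => ramp_eq_zero hb hx)) ?_
  calc gradLqNorm μ (ENNReal.ofReal q) (ramp f a b)
      ≤ eLpNorm (b⁻¹ • {x | a ≤ f x ∧ f x ≤ a + b}.indicator (gradNorm f))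
          (ENNReal.ofReal q) μ :=
        eLpNorm_mono_real fun x => by
          rw [Real.norm_of_nonneg (gradNorm_nonneg _ x)]
          exact gradNorm_ramp_le hf hb x
    _ = _ := by
        rw [eLpNorm_const_smul, eLpNorm_indicator_eq_eLpNorm_restrict hband,
          Real.enorm_of_nonneg (inv_nonneg.2 hb.le)]

end Ramp

def CapacityIneq [PseudoMetricSpace Ω] [MeasurableSpace Ω] (μ : Measure Ω) (N : ℝ → ℝ)
    (q D : ℝ) : Prop :=
  ∀ t ∈ Icc (0 : ℝ) (1 / 2), ENNReal.ofReal (D * nwedge N t) ≤ capacity μ q t (1 / 2)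

section Dyadic

variable {h : Ω → ℝ}

def dyadicLayer (h : Ω → ℝ) (k : ℤ) : Set Ω := h ⁻¹' Ico (2 ^ k) (2 ^ (k + 1))

lemma pairwise_disjoint_dyadicLayer (h : Ω → ℝ) :
    Pairwise (Function.onFun Disjoint (dyadicLayer h)) := by
  refine (pairwise_disjoint_on _).2 fun i j hij => Disjoint.preimage h ?_
  refine Set.disjoint_left.2 fun y hi hj => hi.2.not_ge ?_
  exact (zpow_le_zpow_right₀ one_le_two (by omega : i + 1 ≤ j)).trans hj.1

lemma iUnion_dyadicLayer (h : Ω → ℝ) : ⋃ k, dyadicLayer h k = {x | 0 < h x} := by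
  ext x
  simp only [dyadicLayer, mem_iUnion, mem_preimage, mem_ofPred_eq]
  exact ⟨fun ⟨k, hk⟩ => (zpow_pos two_pos k).trans_le hk.1,
    fun hx => exists_mem_Ico_zpow hx one_lt_two⟩

lemma setLIntegral_pos_eq_tsum_dyadicLayer [MeasurableSpace Ω] (μ : Measure Ω)
    (hh : Measurable h) (F : Ω → ℝ≥0∞) :
    ∫⁻ x in {x | 0 < h x}, F x ∂μ = ∑' k, ∫⁻ x in dyadicLayer h k, F x ∂μ := by
  rw [← iUnion_dyadicLayer, lintegral_iUnion (s := dyadicLayer h) (fun _ => hh measurableSet_Ico)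
    (pairwise_disjoint_dyadicLayer h)]

variable [MeasurableSpace Ω] {μ : Measure Ω} {N : ℝ → ℝ} {q D θ v : ℝ}

lemma setLIntegral_orlicz_dyadicLayer_le (hN : MemN N) (hv : 0 < v) (k : ℤ) :
    ∫⁻ x in dyadicLayer h k, ENNReal.ofReal (N (h x / v)) ∂μ ≤
      ENNReal.ofReal (N (2 ^ (k + 1) / v)) * μ {x | 2 ^ k ≤ h x} :=
  calc ∫⁻ x in dyadicLayer h k, ENNReal.ofReal (N (h x / v)) ∂μ
      ≤ ∫⁻ _ in dyadicLayer h k, ENNReal.ofReal (N (2 ^ (k + 1) / v)) ∂μ :=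
        setLIntegral_mono measurable_const fun x ⟨hx1, hx2⟩ => ENNReal.ofReal_le_ofReal <|
          hN.strictMonoOn.monotoneOn
            (mem_Ici.2 (div_nonneg ((zpow_pos two_pos _).le.trans hx1) hv.le))
            (mem_Ici.2 (by positivity)) (div_le_div_of_nonneg_right hx2.le hv.le)
    _ = ENNReal.ofReal (N (2 ^ (k + 1) / v)) * μ (dyadicLayer h k) := setLIntegral_const _ _
    _ ≤ ENNReal.ofReal (N (2 ^ (k + 1) / v)) * μ {x | 2 ^ k ≤ h x} :=
        mul_le_mul_right (measure_mono fun _ hx => hx.1) _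

lemma toReal_measure_le_half [IsProbabilityMeasure μ] (hh : Measurable h)
    (hmed : (1 / 2 : ℝ≥0∞) ≤ μ {x | h x ≤ 0}) {c : ℝ} (hc : 0 < c) :
    (μ {x | c ≤ h x}).toReal ≤ 1 / 2 := by
  refine ENNReal.toReal_le_of_le_ofReal (by norm_num) ?_
  calc μ {x | c ≤ h x} ≤ μ {x | h x ≤ 0}ᶜ :=
        measure_mono fun x (hx : c ≤ h x) => not_le.2 (hc.trans_le hx)
    _ = 1 - μ {x | h x ≤ 0} := prob_compl_eq_one_sub (measurableSet_le hh measurable_const)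
    _ ≤ 1 - 1 / 2 := tsub_le_tsub_left hmed 1
    _ = ENNReal.ofReal (1 / 2) := by rw [ENNReal.sub_half ENNReal.one_ne_top, ofReal_half]

variable [PseudoMetricSpace Ω] [OpensMeasurableSpace Ω] [IsProbabilityMeasure μ]

/-- The ramp of `h` rising on `[2 ^ k, (1 + θ) 2 ^ k]` is admissible for the capacity of
`{2 ^ (k + 1) ≤ h}`, and `θ < 1` keeps its gradient inside layer `k`. -/
lemma mul_nwedge_le_eLpNorm_dyadicLayer (hcap : CapacityIneq μ N q D)
    (hh : LipschitzOnBalls h) (hmed : (1 / 2 : ℝ≥0∞) ≤ μ {x | h x ≤ 0})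
    (hθ : θ ∈ Ioo 0 1) (k : ℤ)
    (hσ : eLpNorm (gradNorm h) (ENNReal.ofReal q) (μ.restrict (dyadicLayer h k)) ≠ ⊤) :
    D * nwedge N (μ {x | 2 ^ (k + 1) ≤ h x}).toReal ≤
      (θ * 2 ^ k)⁻¹ *
        (eLpNorm (gradNorm h) (ENNReal.ofReal q) (μ.restrict (dyadicLayer h k))).toReal := by
  obtain ⟨hθ0, hθ1⟩ := hθ
  have h2k : (0 : ℝ) < 2 ^ k := zpow_pos two_pos k
  have h2k1 : (2 : ℝ) ^ (k + 1) = 2 * 2 ^ k := by rw [zpow_add_one₀ two_ne_zero, mul_comm]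
  have hband : {x | 2 ^ k ≤ h x ∧ h x ≤ 2 ^ k + θ * 2 ^ k} ⊆ dyadicLayer h k :=
    fun x hx => ⟨hx.1, hx.2.trans_lt (by rw [h2k1]; nlinarith)⟩
  have hramp := capacity_le_ramp μ hh (mul_pos hθ0 h2k) (a := 2 ^ k) (q := q) (c := 1 / 2)
    (ENNReal.ofReal_toReal_le.trans (measure_mono fun x (hx : 2 ^ (k + 1) ≤ h x) =>
      show 2 ^ k + θ * 2 ^ k ≤ h x by rw [h2k1] at hx; nlinarith))
    (by rw [show (1 : ℝ) - 1 / 2 = 1 / 2 by norm_num, ofReal_half]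
        exact hmed.trans (measure_mono fun x (hx : h x ≤ 0) => hx.trans h2k.le))
  refine (ENNReal.ofReal_le_ofReal_iff (by positivity)).1 ((hcap _ ⟨ENNReal.toReal_nonneg,
    toReal_measure_le_half hh.continuous.measurable hmed (zpow_pos two_pos _)⟩).trans
    (hramp.trans ?_))
  rw [ENNReal.ofReal_mul (by positivity), ENNReal.ofReal_toReal hσ]
  exact mul_le_mul_right (eLpNorm_mono_measure _ (Measure.restrict_mono hband le_rfl)) _

lemma setLIntegral_orlicz_dyadicLayer_succ_le (hN : MemN N) (hq : 0 < q)
    (hNq : MonotoneOn (fun t => N t ^ (1 / q) / t) (Ioi 0)) (hD : 0 < D)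
    (hcap : CapacityIneq μ N q D) (hh : LipschitzOnBalls h)
    (hmed : (1 / 2 : ℝ≥0∞) ≤ μ {x | h x ≤ 0})
    (hθ : θ ∈ Ioo 0 1) (hv : 0 < v) (k : ℤ)
    (hσ : ENNReal.ofReal (4 / (D * θ * v)) *
      eLpNorm (gradNorm h) (ENNReal.ofReal q) (μ.restrict (dyadicLayer h k)) ≤ 1) :
    ∫⁻ x in dyadicLayer h (k + 1), ENNReal.ofReal (N (h x / v)) ∂μ ≤
      ENNReal.ofReal (4 / (D * θ * v)) ^ q *
        ∫⁻ x in dyadicLayer h k, ‖gradNorm h x‖ₑ ^ q ∂μ := by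
  have hθ0 := hθ.1
  set σ := eLpNorm (gradNorm h) (ENNReal.ofReal q) (μ.restrict (dyadicLayer h k))
  set r := (μ {x | 2 ^ (k + 1) ≤ h x}).toReal
  have h2k1 : (2 : ℝ) ^ (k + 1) = 2 * 2 ^ k := by rw [zpow_add_one₀ two_ne_zero, mul_comm]
  have hcoef : 0 < 4 / (D * θ * v) := by positivity
  have hσ_top : σ ≠ ⊤ := by
    rintro hσ_top
    rw [hσ_top, ENNReal.mul_top (ENNReal.ofReal_pos.2 hcoef).ne'] at hσ
    exact absurd hσ (by simp)
  have hcap_r := mul_nwedge_le_eLpNorm_dyadicLayer hcap hh hmed hθ k hσ_top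
  have key : r * N (2 ^ (k + 1 + 1) / v) ≤ (4 / (D * θ * v) * σ.toReal) ^ q := by
    have hu : 2 ^ (k + 1 + 1) / v * (σ.toReal / (D * (θ * 2 ^ k))) =
        4 / (D * θ * v) * σ.toReal := by
      rw [zpow_add_one₀ two_ne_zero, h2k1]
      field_simp
      ring
    rw [← hu]
    refine hN.mul_apply_le_rpow_of_nwedge_le hq hNq ENNReal.toReal_nonneg ?_ (by positivity) ?_
    · rw [inv_mul_eq_div, le_div_iff₀ (by positivity)] at hcap_r
      rw [le_div_iff₀ (by positivity)]
      linarith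
    · rw [hu, ← ENNReal.ofReal_le_one, ENNReal.ofReal_mul hcoef.le,
        ENNReal.ofReal_toReal hσ_top]
      exact hσ
  calc ∫⁻ x in dyadicLayer h (k + 1), ENNReal.ofReal (N (h x / v)) ∂μ
      ≤ ENNReal.ofReal (N (2 ^ (k + 1 + 1) / v)) * ENNReal.ofReal r := by
        rw [ENNReal.ofReal_toReal (measure_ne_top _ _)]
        exact setLIntegral_orlicz_dyadicLayer_le hN hv (k + 1)
    _ ≤ ENNReal.ofReal ((4 / (D * θ * v) * σ.toReal) ^ q) := by
        rw [mul_comm, ← ENNReal.ofReal_mul ENNReal.toReal_nonneg]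
        exact ENNReal.ofReal_le_ofReal key
    _ = ENNReal.ofReal (4 / (D * θ * v)) ^ q * σ ^ q := by
        rw [Real.mul_rpow hcoef.le ENNReal.toReal_nonneg, ENNReal.ofReal_mul (by positivity),
          ← ENNReal.ofReal_rpow_of_nonneg hcoef.le hq.le,
          ← ENNReal.ofReal_rpow_of_nonneg ENNReal.toReal_nonneg hq.le,
          ENNReal.ofReal_toReal hσ_top]
    _ = _ := by rw [eLpNorm_ofReal_rpow _ hq]

end Dyadic

section OneSided

variable [PseudoMetricSpace Ω] [MeasurableSpace Ω] [OpensMeasurableSpace Ω] {μ : Measure Ω}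
  [IsProbabilityMeasure μ] {N : ℝ → ℝ} {q D θ v : ℝ} {h : Ω → ℝ}

lemma setLIntegral_orlicz_pos_le (hN : MemN N) (hq : 0 < q)
    (hNq : MonotoneOn (fun t => N t ^ (1 / q) / t) (Ioi 0)) (hD : 0 < D)
    (hcap : CapacityIneq μ N q D) (hh : LipschitzOnBalls h)
    (hmed : (1 / 2 : ℝ≥0∞) ≤ μ {x | h x ≤ 0})
    (hθ : θ ∈ Ioo 0 1) (hv : 0 < v)
    (hE : ENNReal.ofReal (4 / (D * θ * v)) * gradLqNorm μ (ENNReal.ofReal q) h ≤ 1) :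
    ∫⁻ x in {x | 0 < h x}, ENNReal.ofReal (N (h x / v)) ∂μ ≤
      ENNReal.ofReal (4 / (D * θ * v)) ^ q *
        ∫⁻ x in {x | 0 < h x}, ‖gradNorm h x‖ₑ ^ q ∂μ := by
  have hmeas := hh.continuous.measurable
  rw [setLIntegral_pos_eq_tsum_dyadicLayer μ hmeas, setLIntegral_pos_eq_tsum_dyadicLayer μ hmeas,
    ← ENNReal.tsum_mul_left, ← (Equiv.addRight (1 : ℤ)).tsum_eq]
  exact ENNReal.tsum_le_tsum fun k =>
    setLIntegral_orlicz_dyadicLayer_succ_le hN hq hNq hD hcap hh hmed hθ hv k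
      ((mul_le_mul_right (eLpNorm_mono_measure _ Measure.restrict_le_self) _).trans hE)

end OneSided

section Equivalence

variable [PseudoMetricSpace Ω] [MeasurableSpace Ω] [OpensMeasurableSpace Ω] {μ : Measure Ω}
  [IsProbabilityMeasure μ] {N : ℝ → ℝ} {q D : ℝ}

lemma ofReal_mul_nwedge_le_capacity (hN : MemN N) (hD : 0 ≤ D)
    (hyp : ∀ f : Ω → ℝ, LipschitzOnBalls f → ∀ m : ℝ, IsMedian μ f m →
      ENNReal.ofReal (D * orliczNorm μ N fun x => f x - m) ≤ gradLqNorm μ (ENNReal.ofReal q) f)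
    {t : ℝ} (ht : 0 ≤ t) : ENNReal.ofReal (D * nwedge N t) ≤ capacity μ q t (1 / 2) := by
  refine le_iInf fun Φ => le_iInf fun hΦ => le_iInf fun hΦ01 => le_iInf fun h1 =>
    le_iInf fun h0 => ?_
  have hmed : IsMedian μ Φ 0 := by
    refine ⟨?_, ?_⟩
    · rw [show {x | 0 ≤ Φ x} = univ from eq_univ_of_forall fun x => (hΦ01 x).1, measure_univ]
      exact ENNReal.half_le_self
    · rw [show (1 : ℝ) - 1 / 2 = 1 / 2 by norm_num, ofReal_half] at h0
      exact h0.trans (measure_mono fun x (hx : Φ x = 0) => hx.le)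
  have habs : ∀ x, |Φ x - 0| = Φ x := fun x => by rw [sub_zero, abs_of_nonneg (hΦ01 x).1]
  refine le_trans (ENNReal.ofReal_le_ofReal (mul_le_mul_of_nonneg_left ?_ hD)) (hyp Φ hΦ 0 hmed)
  exact nwedge_le_orliczNorm hN (fun x => by rw [habs]; exact (hΦ01 x).2)
    (isClosed_eq hΦ.continuous continuous_const).measurableSet
    (fun x (hx : Φ x = 1) => by rw [habs, hx]) ht h1

lemma lintegral_orlicz_sub_median_le_one (hN : MemN N) (hq : 0 < q)
    (hNq : MonotoneOn (fun t => N t ^ (1 / q) / t) (Ioi 0)) (hD : 0 < D)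
    (hcap : CapacityIneq μ N q D)
    {f : Ω → ℝ} (hf : LipschitzOnBalls f) {m : ℝ} (hmed : IsMedian μ f m) {θ v : ℝ}
    (hθ : θ ∈ Ioo 0 1) (hv : 0 < v)
    (hE : ENNReal.ofReal (4 / (D * θ * v)) * gradLqNorm μ (ENNReal.ofReal q) f ≤ 1) :
    ∫⁻ x, ENNReal.ofReal (N (|f x - m| / v)) ∂μ ≤ 1 := by
  set c := ENNReal.ofReal (4 / (D * θ * v))
  set A := {x | 0 < f x - m}
  set B := {x | 0 < m - f x}
  have hmeas := hf.continuous.measurable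
  have hA : MeasurableSet A := measurableSet_lt measurable_const (hmeas.sub measurable_const)
  have hB : MeasurableSet B := measurableSet_lt measurable_const (measurable_const.sub hmeas)
  have hAB : Disjoint A B :=
    disjoint_left.2 fun x (hxA : 0 < f x - m) (hxB : 0 < m - f x) => by linarith
  have hsplit (F : Ω → ℝ≥0∞) :
      ∫⁻ x in A ∪ B, F x ∂μ = ∫⁻ x in A, F x ∂μ + ∫⁻ x in B, F x ∂μ :=
    lintegral_union hB hAB
  have hpos := setLIntegral_orlicz_pos_le hN hq hNq hD hcap (hf.sub_const m)
    (by simpa only [sub_nonpos] using hmed.2) hθ hv (by rwa [gradLqNorm, gradNorm_sub_const])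
  have hneg := setLIntegral_orlicz_pos_le hN hq hNq hD hcap (hf.const_sub m)
    (by simpa only [sub_nonpos] using hmed.1) hθ hv (by rwa [gradLqNorm, gradNorm_const_sub])
  rw [gradNorm_sub_const] at hpos
  rw [gradNorm_const_sub] at hneg
  calc ∫⁻ x, ENNReal.ofReal (N (|f x - m| / v)) ∂μ
      = ∫⁻ x in A ∪ B, ENNReal.ofReal (N (|f x - m| / v)) ∂μ := by
        refine (setLIntegral_eq_of_support_subset fun x hx => ?_).symm
        by_contra hx'
        simp only [A, B, mem_union, mem_ofPred_eq, not_or, not_lt] at hx'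
        apply hx
        rw [show |f x - m| = 0 by rw [abs_eq_zero]; linarith, zero_div, hN.zero,
          ENNReal.ofReal_zero]
    _ = ∫⁻ x in A, ENNReal.ofReal (N ((f x - m) / v)) ∂μ +
          ∫⁻ x in B, ENNReal.ofReal (N ((m - f x) / v)) ∂μ := by
        rw [hsplit]
        congr 1
        · exact setLIntegral_congr_fun hA fun x (hx : 0 < f x - m) => by rw [abs_of_pos hx]
        · exact setLIntegral_congr_fun hB fun x (hx : 0 < m - f x) => by
            rw [abs_sub_comm, abs_of_pos hx]
    _ ≤ c ^ q * ∫⁻ x in A, ‖gradNorm f x‖ₑ ^ q ∂μ +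
          c ^ q * ∫⁻ x in B, ‖gradNorm f x‖ₑ ^ q ∂μ :=
        add_le_add hpos hneg
    _ ≤ c ^ q * ∫⁻ x, ‖gradNorm f x‖ₑ ^ q ∂μ := by
        rw [← mul_add, ← hsplit]
        gcongr
        exact Measure.restrict_le_self
    _ = (c * gradLqNorm μ (ENNReal.ofReal q) f) ^ q := by
        rw [ENNReal.mul_rpow_of_nonneg _ _ hq.le, gradLqNorm, eLpNorm_ofReal_rpow _ hq]
    _ ≤ 1 := ENNReal.rpow_le_one hE hq.le

lemma ofReal_mul_orliczNorm_le_gradLqNorm (hN : MemN N) (hq : 0 < q)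
    (hNq : MonotoneOn (fun t => N t ^ (1 / q) / t) (Ioi 0)) (hD : 0 < D)
    (hcap : CapacityIneq μ N q D)
    {f : Ω → ℝ} (hf : LipschitzOnBalls f) {m : ℝ} (hmed : IsMedian μ f m) :
    ENNReal.ofReal (D / 4 * orliczNorm μ N fun x => f x - m) ≤
      gradLqNorm μ (ENNReal.ofReal q) f := by
  set G := gradLqNorm μ (ENNReal.ofReal q) f
  obtain hG | hG := eq_top_or_lt_top G
  · rw [hG]; exact le_top
  rw [← ENNReal.ofReal_toReal hG.ne]
  refine ENNReal.ofReal_le_ofReal ?_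
  suffices orliczNorm μ N (fun x => f x - m) ≤ 4 * G.toReal / D by
    rw [le_div_iff₀ hD] at this; linarith
  refine orliczNorm_le_of_forall_lt (by positivity) fun v hv => ?_
  have hv0 : 0 < v := lt_of_le_of_lt (by positivity) hv
  rw [div_lt_iff₀ hD] at hv
  -- any `θ < 1` with `4 G ≤ D θ v` will do
  set θ := max (4 * G.toReal / (D * v)) (1 / 2)
  have hθ : θ ∈ Ioo 0 1 :=
    ⟨by positivity, max_lt ((div_lt_one (by positivity)).2 (by linarith)) (by norm_num)⟩
  refine lintegral_orlicz_sub_median_le_one hN hq hNq hD hcap hf hmed hθ hv0 ?_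
  have hθG : 4 * G.toReal ≤ θ * (D * v) := (div_le_iff₀ (by positivity)).1 (le_max_left _ _)
  change _ * G ≤ 1
  rw [← ENNReal.ofReal_toReal hG.ne, ← ENNReal.ofReal_mul (by positivity),
    ENNReal.ofReal_le_one, div_mul_eq_mul_div, div_le_one (by positivity)]
  linarith

end Equivalence

theorem orlicz_sobolev_iff_cap_general {Ω : Type*} [MetricSpace Ω]
    [MeasurableSpace Ω] [BorelSpace Ω]
    (μ : Measure Ω) [IsProbabilityMeasure μ]
    (N : ℝ → ℝ) (hN : MemN N) (q : ℝ) (hq : 1 ≤ q)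
    (hNq : MonotoneOn (fun t => N t ^ (1 / q) / t) (Ioi (0 : ℝ))) :
    (∀ D₁ : ℝ, 0 < D₁ →
      (∀ f : Ω → ℝ, LipschitzOnBalls f → ∀ m : ℝ, IsMedian μ f m →
        ENNReal.ofReal (D₁ * orliczNorm μ N fun x => f x - m) ≤
          gradLqNorm μ (ENNReal.ofReal q) f) →
      ∀ t ∈ Icc (0 : ℝ) (1 / 2),
        ENNReal.ofReal (D₁ * nwedge N t) ≤ capacity μ q t (1 / 2)) ∧
    (∀ D₂ : ℝ, 0 < D₂ →
      (∀ t ∈ Icc (0 : ℝ) (1 / 2),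
        ENNReal.ofReal (D₂ * nwedge N t) ≤ capacity μ q t (1 / 2)) →
      ∀ f : Ω → ℝ, LipschitzOnBalls f → ∀ m : ℝ, IsMedian μ f m →
        ENNReal.ofReal (D₂ / 4 * orliczNorm μ N fun x => f x - m) ≤
          gradLqNorm μ (ENNReal.ofReal q) f) :=
  ⟨fun _ hD₁ hyp _ ht => ofReal_mul_nwedge_le_capacity hN hD₁.le hyp ht.1,
    fun _ hD₂ hcap _ hf _ hmed =>
      ofReal_mul_orliczNorm_le_gradLqNorm hN (zero_lt_one.trans_le hq) hNq hD₂ hcap hf hmed⟩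

/-- For `N ∈ 𝒩` with `N(t)^{1/q}/t` non-decreasing, Orlicz–Sobolev
inequalities are equivalent to `q`-capacity inequalities: (1) with `D₁` gives (2) with
`D₂ = D₁`, and (2) with `D₂` gives (1) with `D₂/4` (so `D₁ ≤ D₂ ≤ 4·D₁`). -/
theorem orlicz_sobolev_iff_cap {Ω : Type*} [MetricSpace Ω]
    [TopologicalSpace.SeparableSpace Ω] [MeasurableSpace Ω] [BorelSpace Ω]
    (μ : Measure Ω) [IsProbabilityMeasure μ] (hnd : ∀ x : Ω, μ {x} ≠ 1)
    (N : ℝ → ℝ) (hN : MemN N) (q : ℝ) (hq : 1 ≤ q)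
    (hNq : MonotoneOn (fun t => N t ^ (1 / q) / t) (Ioi (0 : ℝ))) :
    (∀ D₁ : ℝ, 0 < D₁ →
      (∀ f : Ω → ℝ, LipschitzOnBalls f → ∀ m : ℝ, IsMedian μ f m →
        ENNReal.ofReal (D₁ * orliczNorm μ N fun x => f x - m) ≤
          gradLqNorm μ (ENNReal.ofReal q) f) →
      ∀ t ∈ Icc (0 : ℝ) (1 / 2),
        ENNReal.ofReal (D₁ * nwedge N t) ≤ capacity μ q t (1 / 2)) ∧
    (∀ D₂ : ℝ, 0 < D₂ →
      (∀ t ∈ Icc (0 : ℝ) (1 / 2),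
        ENNReal.ofReal (D₂ * nwedge N t) ≤ capacity μ q t (1 / 2)) →
      ∀ f : Ω → ℝ, LipschitzOnBalls f → ∀ m : ℝ, IsMedian μ f m →
        ENNReal.ofReal (D₂ / 4 * orliczNorm μ N fun x => f x - m) ≤
          gradLqNorm μ (ENNReal.ofReal q) f) :=
  orlicz_sobolev_iff_cap_general μ N hN q hq hNq
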